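/- Let X be a topological space and Y a disconnected metrizable separable space. Then X is almost strongly zero-dimensional if and only if K₁(X,Y) = B₁(X,Y). -/

import Mathlib

open Set Filter Topology

def IsZeroSet {X : Type*} [TopologicalSpace X] (A : Set X) : Prop :=
  ∃ f : X → ℝ, Continuous f ∧ A = f ⁻¹' {0}

def IsCozeroSet {X : Type*} [TopologicalSpace X] (A : Set X) : Prop := IsZeroSet Aᶜ

def IsDiscreteFamily {X : Type*} [TopologicalSpace X] {ι : Type*} (U : ι → Set X) : Prop :=
  ∀ x : X, ∃ V ∈ 𝓝 x, {i | (U i ∩ V).Nonempty}.Subsingleton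

def IsSFDFamily {X : Type*} [TopologicalSpace X] {ι : Type*} (A : ι → Set X) : Prop :=
  ∃ U : ι → Set X, IsDiscreteFamily U ∧ (∀ i, IsCozeroSet (U i)) ∧ ∀ i, closure (A i) ⊆ U i

def IsSFDSetFamily {X : Type*} [TopologicalSpace X] (𝓐 : Set (Set X)) : Prop :=
  IsSFDFamily (fun A : 𝓐 => (A : Set X))

def IsBaseFor {X Y : Type*} [TopologicalSpace X] [TopologicalSpace Y]
    (𝓑 : Set (Set X)) (f : X → Y) : Prop :=
  ∀ V : Set Y, IsOpen V → ∃ 𝓢 ⊆ 𝓑, f ⁻¹' V = ⋃₀ 𝓢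

def FunctionallyFSigma {X : Type*} [TopologicalSpace X] (A : Set X) : Prop :=
  ∃ F : ℕ → Set X, (∀ n, IsZeroSet (F n)) ∧ A = ⋃ n, F n

def MemK1 {X Y : Type*} [TopologicalSpace X] [TopologicalSpace Y] (f : X → Y) : Prop :=
  ∀ V : Set Y, IsOpen V → FunctionallyFSigma (f ⁻¹' V)

def MemB1 {X Y : Type*} [TopologicalSpace X] [TopologicalSpace Y] (f : X → Y) : Prop :=
  ∃ g : ℕ → X → Y, (∀ n, Continuous (g n)) ∧
    ∀ x, Tendsto (fun n => g n x) atTop (𝓝 (f x))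

def MemSigmaF {X Y : Type*} [TopologicalSpace X] [TopologicalSpace Y] (f : X → Y) : Prop :=
  ∃ 𝓑 : ℕ → Set (Set X), (∀ n, IsSFDSetFamily (𝓑 n)) ∧ IsBaseFor (⋃ n, 𝓑 n) f

def MemSigmaF0 {X Y : Type*} [TopologicalSpace X] [TopologicalSpace Y] (f : X → Y) : Prop :=
  ∃ 𝓑 : ℕ → Set (Set X), (∀ n, IsSFDSetFamily (𝓑 n)) ∧
    (∀ n, ∀ A ∈ 𝓑 n, IsZeroSet A) ∧ IsBaseFor (⋃ n, 𝓑 n) f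

def CompletelySeparatedSets {X : Type*} [TopologicalSpace X] (A B : Set X) : Prop :=
  ∃ h : X → ℝ, Continuous h ∧ (∀ x, h x ∈ Icc (0:ℝ) 1) ∧
    (∀ x ∈ A, h x = 0) ∧ ∀ x ∈ B, h x = 1

def StronglyZeroDimensional (X : Type*) [TopologicalSpace X] : Prop :=
  ∀ A B : Set X, CompletelySeparatedSets A B → ∃ U : Set X, IsClopen U ∧ A ⊆ U ∧ U ⊆ Bᶜ

def IsCSet {X : Type*} [TopologicalSpace X] (A : Set X) : Prop :=
  ∃ U : ℕ → Set X, (∀ n, IsClopen (U n)) ∧ A = ⋂ n, U n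

def IsCSigmaSet {X : Type*} [TopologicalSpace X] (A : Set X) : Prop :=
  ∃ C : ℕ → Set X, (∀ n, IsCSet (C n)) ∧ A = ⋃ n, C n

def AlmostStronglyZeroDimensional (X : Type*) [TopologicalSpace X] : Prop :=
  ∀ A : Set X, IsZeroSet A → IsCSigmaSet A

def CountablyCompactIn {X : Type*} [TopologicalSpace X] (F : Set X) : Prop :=
  ∀ U : ℕ → Set X, (∀ n, IsOpen (U n)) → F ⊆ ⋃ n, U n →
    ∃ s : Finset ℕ, F ⊆ ⋃ n ∈ s, U n

/-!
`B₁ ⊆ K₁` holds for every perfectly normal target: writing an open `W` as `{φ ≠ 0}` and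
`gₘ → f`, one has `f⁻¹ W = ⋃ k N, ⋂ m, {1/(k+1) ≤ |φ (g (m + N) x)|}`.

If `X` is almost strongly zero-dimensional and `f ∈ K₁`, preimages of balls are
countable unions of C-sets, so for each `n` the space is covered by countably many C-sets
`K n j` on which `f` oscillates by less than `2/(n+1)`. Approximating each `K n j` by clopen
sets `D n j m`, the stage-`m` map picks at every level the first index whose `m`-th
approximation contains `x` and returns the value of `f` at a point of the longest nonempty
cell along these indices. It depends on finitely many clopen sets, hence is continuous, and
for fixed `x` the indices of the first levels eventually become the true ones.

Conversely, split `Y` by a clopen `U ∋ u` with `v ∉ U`. For a zero set `A` the map equal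
to `u` on `A` and to `v` off `A` is in `K₁`, hence in `B₁`, and `A`, the set of points whose
approximations eventually stay in `U`, is a countable union of C-sets.
-/

section ZeroSets

variable {X : Type*} [TopologicalSpace X]

theorem isZeroSet_setOf_le {h : X → ℝ} (hh : Continuous h) (r : ℝ) :
    IsZeroSet {x | r ≤ h x} :=
  ⟨fun x => max (r - h x) 0, by fun_prop, by ext x; simp⟩

theorem IsZeroSet.iInter {A : ℕ → Set X} (hA : ∀ n, IsZeroSet (A n)) :
    IsZeroSet (⋂ n, A n) := by
  choose g hg hgA using hA
  set φ : ℕ → X → ℝ := fun n x => min |g n x| 1 * (1 / 2) ^ n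
  have hφ_nonneg (n : ℕ) (x : X) : 0 ≤ φ n x := by positivity
  have hφ_le (n : ℕ) (x : X) : ‖φ n x‖ ≤ (1 / 2) ^ n := by
    rw [Real.norm_of_nonneg (hφ_nonneg n x)]
    exact mul_le_of_le_one_left (by positivity) (min_le_right _ _)
  have hφ_eq_zero (n : ℕ) (x : X) : φ n x = 0 ↔ g n x = 0 := by
    simpa [φ, min_eq_iff] using fun h : g n x = 0 => by simp [h]
  refine ⟨fun x => ∑' n, φ n x,
    continuous_tsum (fun n => by fun_prop) summable_geometric_two hφ_le, ?_⟩
  ext x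
  have hsum : Summable (φ · x) := summable_geometric_two.of_norm_bounded (hφ_le · x)
  rw [mem_preimage, mem_singleton_iff, ← hsum.hasSum_iff,
    hasSum_zero_iff_of_nonneg (hφ_nonneg · x), funext_iff]
  simp only [hgA, mem_iInter, mem_preimage, mem_singleton_iff, Pi.zero_apply, hφ_eq_zero]

theorem IsZeroSet.functionallyFSigma {A : Set X} (hA : IsZeroSet A) : FunctionallyFSigma A :=
  ⟨fun _ => A, fun _ => hA, (iUnion_const A).symm⟩

theorem functionallyFSigma_setOf_ne_zero_of_tendsto {h : ℕ → X → ℝ} (hh : ∀ n, Continuous (h n))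
    {φ : X → ℝ} (hlim : ∀ x, Tendsto (h · x) atTop (𝓝 (φ x))) :
    FunctionallyFSigma {x | φ x ≠ 0} := by
  let B : ℕ → ℕ → Set X := fun k N => ⋂ m, {x | 1 / (k + 1) ≤ |h (m + N) x|}
  refine ⟨fun n => B n.unpair.1 n.unpair.2,
    fun n => IsZeroSet.iInter fun m => isZeroSet_setOf_le (hh _).abs _, ?_⟩
  rw [iUnion_unpair]
  ext x
  have habs : Tendsto (fun n => |h n x|) atTop (𝓝 |φ x|) := (hlim x).abs
  simp only [B, mem_ofPred_eq, mem_iUnion, mem_iInter]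
  constructor
  · intro hx
    obtain ⟨k, hk⟩ := exists_nat_one_div_lt (abs_pos.2 hx)
    obtain ⟨N, hN⟩ := eventually_atTop.1 (habs.eventually (lt_mem_nhds hk))
    exact ⟨k, N, fun m => (hN _ (Nat.le_add_left N m)).le⟩
  · rintro ⟨k, N, hkN⟩
    have hk : 1 / (k + 1 : ℝ) ≤ |φ x| := ge_of_tendsto' ((tendsto_add_atTop_iff_nat N).2 habs) hkN
    exact abs_pos.1 (lt_of_lt_of_le (by positivity) hk)

theorem IsZeroSet.functionallyFSigma_compl {A : Set X} (hA : IsZeroSet A) :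
    FunctionallyFSigma Aᶜ := by
  obtain ⟨g, hg, rfl⟩ := hA
  exact functionallyFSigma_setOf_ne_zero_of_tendsto (fun _ => hg) fun _ => tendsto_const_nhds

theorem MemB1.memK1 {Y : Type*} [TopologicalSpace Y] [PerfectlyNormalSpace Y] {f : X → Y}
    (hf : MemB1 f) : MemK1 f := by
  obtain ⟨g, hg, hlim⟩ := hf
  intro W hW
  obtain ⟨φ, hφ, -⟩ := perfectlyNormalSpace_iff_forall_isClosed_preimage_zero.1
    ‹PerfectlyNormalSpace Y› Wᶜ hW.isClosed_compl
  have hW : f ⁻¹' W = {x | φ (f x) ≠ 0} := by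
    ext x
    rw [mem_preimage, ← notMem_compl_iff, hφ]
    rfl
  rw [hW]
  exact functionallyFSigma_setOf_ne_zero_of_tendsto (fun n => φ.continuous.comp (hg n))
    fun x => (φ.continuous.tendsto _).comp (hlim x)

end ZeroSets

section CSets

variable {X : Type*} [TopologicalSpace X]

theorem IsCSigmaSet.iUnion {A : ℕ → Set X} (hA : ∀ n, IsCSigmaSet (A n)) :
    IsCSigmaSet (⋃ n, A n) := by
  choose C hC hCA using hA
  refine ⟨fun n => C n.unpair.1 n.unpair.2, fun n => hC _ _, ?_⟩
  rw [iUnion_unpair]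
  exact iUnion_congr hCA

theorem IsCSet.exists_clopen_eventually_mem_iff {A : Set X} (hA : IsCSet A) :
    ∃ D : ℕ → Set X, (∀ m, IsClopen (D m)) ∧ ∀ x, ∀ᶠ m in atTop, (x ∈ D m ↔ x ∈ A) := by
  obtain ⟨U, hU, rfl⟩ := hA
  refine ⟨fun m => ⋂ l ≤ m, U l,
    fun m => (finite_le_nat m).isClopen_biInter fun l _ => hU l, fun x => ?_⟩
  by_cases hx : x ∈ ⋂ l, U l
  · exact Eventually.of_forall fun m =>
      iff_of_true (mem_iInter₂_of_mem fun l _ => mem_iInter.1 hx l) hx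
  · obtain ⟨l, hl⟩ : ∃ l, x ∉ U l := by simpa using hx
    filter_upwards [eventually_ge_atTop l] with m hm
    exact iff_of_false (fun h => hl (mem_iInter₂.1 h l hm)) hx

theorem AlmostStronglyZeroDimensional.isCSigmaSet_preimage {Y : Type*} [TopologicalSpace Y]
    (hX : AlmostStronglyZeroDimensional X) {f : X → Y} (hf : MemK1 f) {V : Set Y}
    (hV : IsOpen V) : IsCSigmaSet (f ⁻¹' V) := by
  obtain ⟨Z, hZ, hZV⟩ := hf V hV
  rw [hZV]
  exact IsCSigmaSet.iUnion fun n => hX _ (hZ n)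

theorem exists_isCSet_cover_preimage_ball {Y : Type*} [PseudoMetricSpace Y]
    [TopologicalSpace.SeparableSpace Y] [Nonempty Y] {f : X → Y}
    (hf : ∀ V, IsOpen V → IsCSigmaSet (f ⁻¹' V)) {r : ℝ} (hr : 0 < r) :
    ∃ K : ℕ → Set X, (∀ j, IsCSet (K j)) ∧ (∀ x, ∃ j, x ∈ K j) ∧
      ∀ j, ∃ y, K j ⊆ f ⁻¹' Metric.ball y r := by
  obtain ⟨y, hy⟩ := TopologicalSpace.exists_dense_seq Y
  choose C hC hCf using fun k => hf _ (Metric.isOpen_ball (x := y k) (ε := r))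
  refine ⟨fun j => C j.unpair.1 j.unpair.2, fun j => hC _ _, fun x => ?_,
    fun j => ⟨y j.unpair.1, (hCf _).symm ▸ subset_iUnion (C _) _⟩⟩
  obtain ⟨k, hk⟩ := hy.exists_dist_lt (f x) hr
  have hx : x ∈ f ⁻¹' Metric.ball (y k) r := hk
  rw [hCf k, mem_iUnion] at hx
  obtain ⟨i, hi⟩ := hx
  exact ⟨Nat.pair k i, by simpa using hi⟩

theorem MemB1.isCSigmaSet_preimage {Y : Type*} [TopologicalSpace Y] {F : X → Y} (hF : MemB1 F)
    {U : Set Y} (hU : IsClopen U) : IsCSigmaSet (F ⁻¹' U) := by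
  obtain ⟨g, hg, hlim⟩ := hF
  refine ⟨fun N => ⋂ m, g (m + N) ⁻¹' U, fun N => ⟨_, fun m => hU.preimage (hg _), rfl⟩, ?_⟩
  ext x
  simp only [mem_preimage, mem_iUnion, mem_iInter]
  constructor
  · intro hx
    obtain ⟨N, hN⟩ := eventually_atTop.1 (hlim x (hU.isOpen.mem_nhds hx))
    exact ⟨N, fun m => hN _ (Nat.le_add_left N m)⟩
  · rintro ⟨N, hN⟩
    by_contra hx
    obtain ⟨M, hM⟩ := eventually_atTop.1 (hlim x (hU.isClosed.isOpen_compl.mem_nhds hx))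
    exact hM (M + N) (Nat.le_add_right M N) (hN M)

end CSets

theorem isLocallyConstant_of_determined_by_clopens {X Y ι : Type*} [TopologicalSpace X] [Finite ι]
    {C : ι → Set X} (hC : ∀ i, IsClopen (C i)) {g : X → Y}
    (hg : ∀ x x', (∀ i, x ∈ C i ↔ x' ∈ C i) → g x = g x') :
    IsLocallyConstant g := by
  refine (IsLocallyConstant.iff_eventually_eq g).2 fun x => ?_
  suffices ∀ᶠ x' in 𝓝 x, ∀ i, x ∈ C i ↔ x' ∈ C i from
    this.mono fun x' hx' => (hg x x' hx').symm
  refine eventually_all.2 fun i => ?_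
  by_cases hx : x ∈ C i
  · filter_upwards [(hC i).isOpen.mem_nhds hx] with x' hx' using iff_of_true hx hx'
  · filter_upwards [(hC i).isClosed.isOpen_compl.mem_nhds hx] with x' hx' using iff_of_false hx hx'

theorem Nat.findGreatest_congr {P Q : ℕ → Prop} [DecidablePred P] [DecidablePred Q] {n : ℕ}
    (h : ∀ k ≤ n, P k ↔ Q k) : Nat.findGreatest P n = Nat.findGreatest Q n := by
  induction n with
  | zero => rfl
  | succ n ih =>
    rw [Nat.findGreatest_succ, Nat.findGreatest_succ, ih fun k hk => h k (hk.trans n.le_succ)]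
    simp only [h (n + 1) le_rfl]

section StageMaps

variable {X Y : Type*}

open Classical in
/-- The least `j` with `x ∈ D n j m`, capped at `m`: looking only at `j < m` keeps the stage-`m`
map locally constant. -/
noncomputable def cellIndex (D : ℕ → ℕ → ℕ → Set X) (m : ℕ) (x : X) (n : ℕ) : ℕ :=
  Nat.find (⟨m, Or.inr le_rfl⟩ : ∃ j, x ∈ D n j m ∨ m ≤ j)

def prefixCell (K : ℕ → ℕ → Set X) (s : ℕ → ℕ) (L : ℕ) : Set X :=
  ⋂ i < L, K i (s i)

open Classical in
/-- The value of `f` at some point of the longest nonempty cell `prefixCell K s L`, `L ≤ m`.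
Once the first `n + 1` indices of `s` are those of `x`, this point lies in the level-`n` cell
of `x`, whatever the later, not yet stabilised, indices are. -/
noncomputable def cellValue [Nonempty Y] (f : X → Y) (K : ℕ → ℕ → Set X) (s : ℕ → ℕ) (m : ℕ) :
    Y :=
  Classical.epsilon
    (· ∈ f '' prefixCell K s (Nat.findGreatest (fun L => (prefixCell K s L).Nonempty) m))

theorem cellIndex_congr {D : ℕ → ℕ → ℕ → Set X} {m n : ℕ} {x x' : X}
    (h : ∀ j < m, x ∈ D n j m ↔ x' ∈ D n j m) : cellIndex D m x n = cellIndex D m x' n := by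
  classical
  refine Nat.find_congr (Or.inr le_rfl) fun j hj => ?_
  rcases hj.lt_or_eq with hj | rfl
  · exact or_congr_left (h j hj)
  · exact iff_of_true (Or.inr le_rfl) (Or.inr le_rfl)

theorem eventually_mem_cellIndex {K : ℕ → ℕ → Set X} {D : ℕ → ℕ → ℕ → Set X} {x : X} {n : ℕ}
    (hD : ∀ j, ∀ᶠ m in atTop, (x ∈ D n j m ↔ x ∈ K n j)) (hx : ∃ j, x ∈ K n j) :
    ∀ᶠ m in atTop, x ∈ K n (cellIndex D m x n) := by
  classical
  filter_upwards [eventually_gt_atTop (Nat.find hx),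
    (eventually_all_finite (finite_le_nat (Nat.find hx))).2 fun j _ => hD j] with m hm hj
  suffices cellIndex D m x n = Nat.find hx from this ▸ Nat.find_spec hx
  rw [cellIndex, Nat.find_eq_iff]
  refine ⟨Or.inl ((hj _ le_rfl).2 (Nat.find_spec hx)), fun j hjlt => ?_⟩
  rintro (hxj | hmj)
  · exact Nat.find_min hx hjlt ((hj j hjlt.le).1 hxj)
  · omega

theorem eventually_mem_prefixCell_cellIndex {K : ℕ → ℕ → Set X} {D : ℕ → ℕ → ℕ → Set X}
    {x : X} (hD : ∀ n j, ∀ᶠ m in atTop, (x ∈ D n j m ↔ x ∈ K n j)) (hx : ∀ n, ∃ j, x ∈ K n j)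
    (L : ℕ) : ∀ᶠ m in atTop, x ∈ prefixCell K (cellIndex D m x) L := by
  filter_upwards [(eventually_all_finite (finite_lt_nat L)).2 fun n _ =>
    eventually_mem_cellIndex (hD n) (hx n)] with m hm
  exact mem_iInter₂.2 hm

theorem prefixCell_antitone (K : ℕ → ℕ → Set X) (s : ℕ → ℕ) : Antitone (prefixCell K s) :=
  fun _ _ hLL' => iInter₂_mono' fun i hi => ⟨i, hi.trans_le hLL', subset_rfl⟩

variable [Nonempty Y] {f : X → Y} {K : ℕ → ℕ → Set X}

theorem cellValue_congr {s t : ℕ → ℕ} {m : ℕ} (h : ∀ i < m, s i = t i) :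
    cellValue f K s m = cellValue f K t m := by
  have hcell : ∀ L ≤ m, prefixCell K s L = prefixCell K t L := fun L hL =>
    iInter₂_congr fun i hi => by rw [h i (hi.trans_le hL)]
  classical
  unfold cellValue
  rw [Nat.findGreatest_congr fun L hL => by rw [hcell L hL],
    hcell _ (Nat.findGreatest_le m)]

theorem cellValue_mem_image {s : ℕ → ℕ} {L m : ℕ} (hL : (prefixCell K s L).Nonempty)
    (hLm : L ≤ m) : cellValue f K s m ∈ f '' prefixCell K s L := by
  classical
  let P := fun L => (prefixCell K s L).Nonempty
  exact image_mono (prefixCell_antitone K s (Nat.le_findGreatest (P := P) hLm hL))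
    (Classical.epsilon_spec ((Nat.findGreatest_spec (P := P) hLm hL).image f))

theorem dist_cellValue_lt [PseudoMetricSpace Y]
    (hK : ∀ n j, ∃ y, K n j ⊆ f ⁻¹' Metric.ball y (1 / (n + 1))) {s : ℕ → ℕ} {n m : ℕ} {x : X}
    (hx : x ∈ prefixCell K s (n + 1)) (hnm : n + 1 ≤ m) :
    dist (cellValue f K s m) (f x) < 2 / (n + 1) := by
  obtain ⟨w, hw, hwx⟩ := cellValue_mem_image (f := f) ⟨x, hx⟩ hnm
  have hK_n : prefixCell K s (n + 1) ⊆ K n (s n) := biInter_subset_of_mem n.lt_succ_self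
  obtain ⟨y, hy⟩ := hK n (s n)
  rw [← hwx]
  calc dist (f w) (f x) ≤ dist (f w) y + dist (f x) y := dist_triangle_right _ _ _
    _ < 1 / (n + 1) + 1 / (n + 1) := add_lt_add (hy (hK_n hw)) (hy (hK_n hx))
    _ = 2 / (n + 1) := by ring

theorem continuous_cellValue_cellIndex [TopologicalSpace X] [TopologicalSpace Y]
    {D : ℕ → ℕ → ℕ → Set X} {m : ℕ} (hD : ∀ n j, IsClopen (D n j m)) :
    Continuous fun x => cellValue f K (cellIndex D m x) m := by
  refine IsLocallyConstant.continuous <| isLocallyConstant_of_determined_by_clopens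
    (C := fun p : Fin m × Fin m => D p.1 p.2 m) (fun p => hD _ _) fun x x' h => ?_
  refine cellValue_congr fun n hn => cellIndex_congr fun j hj => ?_
  exact h (⟨n, hn⟩, ⟨j, hj⟩)

theorem memB1_of_isCSet_covers [TopologicalSpace X] [PseudoMetricSpace Y]
    (hK : ∀ n j, IsCSet (K n j)) (hcover : ∀ n x, ∃ j, x ∈ K n j)
    (hsmall : ∀ n j, ∃ y, K n j ⊆ f ⁻¹' Metric.ball y (1 / (n + 1))) : MemB1 f := by
  choose D hD_clopen hD using fun n j => (hK n j).exists_clopen_eventually_mem_iff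
  refine ⟨fun m x => cellValue f K (cellIndex D m x) m,
    fun m => continuous_cellValue_cellIndex fun n j => hD_clopen n j m,
    fun x => Metric.tendsto_nhds.2 fun ε hε => ?_⟩
  obtain ⟨n, hn⟩ := exists_nat_one_div_lt (half_pos hε)
  filter_upwards [eventually_ge_atTop (n + 1),
    eventually_mem_prefixCell_cellIndex (fun n j => hD n j x) (hcover · x) (n + 1)] with m hm hx
  calc dist (cellValue f K (cellIndex D m x) m) (f x)
      < 2 / (n + 1) := dist_cellValue_lt hsmall hx hm
    _ < ε := by rw [div_eq_mul_one_div]; linarith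

end StageMaps

theorem AlmostStronglyZeroDimensional.memB1_of_memK1 {X Y : Type*} [TopologicalSpace X]
    [PseudoMetricSpace Y] [TopologicalSpace.SeparableSpace Y] [Nonempty Y]
    (hX : AlmostStronglyZeroDimensional X) {f : X → Y} (hf : MemK1 f) : MemB1 f := by
  choose K hK hcover hsmall using fun n : ℕ =>
    exists_isCSet_cover_preimage_ball (fun V hV => hX.isCSigmaSet_preimage hf hV)
      (Nat.one_div_pos_of_nat (n := n))
  exact memB1_of_isCSet_covers hK hcover hsmall

open Classical in
theorem IsZeroSet.memK1_ite {X Y : Type*} [TopologicalSpace X] [TopologicalSpace Y] {A : Set X}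
    (hA : IsZeroSet A) (u v : Y) : MemK1 fun x => if x ∈ A then u else v := by
  intro W _
  by_cases hu : u ∈ W <;> by_cases hv : v ∈ W
  · convert IsZeroSet.functionallyFSigma (A := univ) ⟨fun _ => 0, continuous_const, by simp⟩
    ext x; by_cases hx : x ∈ A <;> simp [hx, hu, hv]
  · convert hA.functionallyFSigma
    ext x; by_cases hx : x ∈ A <;> simp [hx, hu, hv]
  · convert hA.functionallyFSigma_compl
    ext x; by_cases hx : x ∈ A <;> simp [hx, hu, hv]
  · convert IsZeroSet.functionallyFSigma (A := ∅) ⟨fun _ => 1, continuous_const, by simp⟩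
    ext x; by_cases hx : x ∈ A <;> simp [hx, hu, hv]

theorem stmt18 {X Y : Type*} [TopologicalSpace X] [TopologicalSpace Y]
    [TopologicalSpace.MetrizableSpace Y] [TopologicalSpace.SeparableSpace Y]
    (hY : ∃ U V : Set Y, IsClopen U ∧ IsClopen V ∧ U.Nonempty ∧ V.Nonempty ∧
      Disjoint U V ∧ U ∪ V = Set.univ) :
    AlmostStronglyZeroDimensional X ↔ ∀ f : X → Y, MemK1 f ↔ MemB1 f := by
  obtain ⟨U, V, hU, -, ⟨u, hu⟩, ⟨v, hv⟩, hUV, -⟩ := hY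
  let _ : MetricSpace Y := TopologicalSpace.metrizableSpaceMetric Y
  have : Nonempty Y := ⟨u⟩
  refine ⟨fun hX f => ⟨hX.memB1_of_memK1, MemB1.memK1⟩, fun h A hA => ?_⟩
  classical
  have hvU : v ∉ U := hUV.notMem_of_mem_right hv
  convert ((h _).1 (hA.memK1_ite u v)).isCSigmaSet_preimage hU
  ext x
  by_cases hx : x ∈ A <;> simp [hx, hu, hvU]
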